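/- arXiv:2603.01575 — 2 statements merged into one kernel-verified Lean document; each statement's English description precedes it below -/
import Mathlib

section
/- A finite-outcome measurement A = (a_x)_{x∈X} on a state space S is intersubjective (1-intersubjective) if and only if it is sharp (1-sharp). That is: every joint measurement B of A with itself satisfies ∑_x b_{x,x} = 1_S if and only if for all x ≠ x', the only effect b with b ≤ a_x and b ≤ a_{x'} is the zero effect. -/
/-!
An off-diagonal entry `B (x, y)` of a joint measurement of `A` with itself lies below both `a x`
(row marginal) and `a y` (column marginal), so sharpness kills it and the diagonal carries the whole
unit effect. Conversely, an effect `b` below `a x` and `a x'` can be moved, in the diagonal joint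
measurement `B (i, j) = [i = j] a i`, from the entries `(x, x)`, `(x', x')` to `(x, x')`, `(x', x)`:
the marginals do not change and the diagonal now sums to `1 - 2 b`, so intersubjectivity forces
`b = 0`.
-/

open Finset

/-- An effect on the state space `S`: an affine map taking values in `[0,1]` on `S`. -/
def IsEffect {V : Type*} [AddCommGroup V] [Module ℝ V] (S : Set V) (a : V →ᵃ[ℝ] ℝ) : Prop :=
  ∀ s ∈ S, 0 ≤ a s ∧ a s ≤ 1

/-- A finite-outcome measurement: a family of effects summing to the unit effect on `S`. -/
def IsMeasurement {V : Type*} [AddCommGroup V] [Module ℝ V] (S : Set V) {X : Type*} [Fintype X]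
    (A : X → (V →ᵃ[ℝ] ℝ)) : Prop :=
  (∀ x, IsEffect S (A x)) ∧ ∀ s ∈ S, ∑ x, A x s = 1

/-- A joint measurement of `A` and `B`: a measurement on `X × Y` whose marginals are `A`, `B`. -/
def IsJointMeasurement {V : Type*} [AddCommGroup V] [Module ℝ V] (S : Set V)
    {X Y : Type*} [Fintype X] [Fintype Y]
    (A : X → (V →ᵃ[ℝ] ℝ)) (B : Y → (V →ᵃ[ℝ] ℝ)) (C : X × Y → (V →ᵃ[ℝ] ℝ)) : Prop :=
  IsMeasurement S C ∧ (∀ x, ∀ s ∈ S, ∑ y, C (x, y) s = A x s) ∧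
    (∀ y, ∀ s ∈ S, ∑ x, C (x, y) s = B y s)

/-- `A` is `α`-intersubjective: every joint measurement of `A` with itself has diagonal
weight at least `α · 1_S`. -/
def Intersubjective {V : Type*} [AddCommGroup V] [Module ℝ V] (S : Set V) {X : Type*} [Fintype X]
    (α : ℝ) (A : X → (V →ᵃ[ℝ] ℝ)) : Prop :=
  ∀ C : X × X → (V →ᵃ[ℝ] ℝ), IsJointMeasurement S A A C → ∀ s ∈ S, α ≤ ∑ x, C (x, x) s

/-- `A` is `α`-sharp: for distinct outcomes `x ≠ x'`, any effect below both `A x` and `A x'`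
is below `(1 - α) · 1_S`. -/
def SharpMeasurement {V : Type*} [AddCommGroup V] [Module ℝ V] (S : Set V) {X : Type*} [Fintype X]
    (α : ℝ) (A : X → (V →ᵃ[ℝ] ℝ)) : Prop :=
  ∀ x x', x ≠ x' → ∀ b : V →ᵃ[ℝ] ℝ, IsEffect S b → (∀ s ∈ S, b s ≤ A x s) →
    (∀ s ∈ S, b s ≤ A x' s) → ∀ s ∈ S, b s ≤ 1 - α

section JointMeasurement

variable {V : Type*} [AddCommGroup V] [Module ℝ V] {S : Set V} {X Y : Type*} [Fintype X]
  [Fintype Y]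

theorem isMeasurement_of_nonneg {C : X → V →ᵃ[ℝ] ℝ} (hC : ∀ x, ∀ s ∈ S, 0 ≤ C x s)
    (hsum : ∀ s ∈ S, ∑ x, C x s = 1) : IsMeasurement S C := by
  refine ⟨fun x s hs => ⟨hC x s hs, ?_⟩, hsum⟩
  calc C x s ≤ ∑ y, C y s := single_le_sum (fun y _ => hC y s hs) (mem_univ x)
    _ = 1 := hsum s hs

theorem isJointMeasurement_of_nonneg {A : X → V →ᵃ[ℝ] ℝ} {B : Y → V →ᵃ[ℝ] ℝ}
    {C : X × Y → V →ᵃ[ℝ] ℝ} (hA : IsMeasurement S A) (hC : ∀ p, ∀ s ∈ S, 0 ≤ C p s)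
    (hrow : ∀ x, ∀ s ∈ S, ∑ y, C (x, y) s = A x s)
    (hcol : ∀ y, ∀ s ∈ S, ∑ x, C (x, y) s = B y s) : IsJointMeasurement S A B C := by
  refine ⟨isMeasurement_of_nonneg hC fun s hs => ?_, hrow, hcol⟩
  rw [Fintype.sum_prod_type, ← hA.2 s hs]
  exact sum_congr rfl fun x _ => hrow x s hs

namespace IsJointMeasurement

variable {A : X → V →ᵃ[ℝ] ℝ} {B : Y → V →ᵃ[ℝ] ℝ} {C : X × Y → V →ᵃ[ℝ] ℝ}

theorem apply_le_left (hC : IsJointMeasurement S A B C) (x : X) (y : Y) {s : V} (hs : s ∈ S) :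
    C (x, y) s ≤ A x s := by
  rw [← hC.2.1 x s hs]
  exact single_le_sum (fun z _ => (hC.1.1 (x, z) s hs).1) (mem_univ y)

theorem apply_le_right (hC : IsJointMeasurement S A B C) (x : X) (y : Y) {s : V} (hs : s ∈ S) :
    C (x, y) s ≤ B y s := by
  rw [← hC.2.2 y s hs]
  exact single_le_sum (fun z _ => (hC.1.1 (z, y) s hs).1) (mem_univ x)

end IsJointMeasurement

theorem IsMeasurement.sum_diag_eq_one {C : X × X → V →ᵃ[ℝ] ℝ} (hC : IsMeasurement S C) {s : V}
    (hs : s ∈ S) (hoff : ∀ x y, x ≠ y → C (x, y) s = 0) : ∑ x, C (x, x) s = 1 := by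
  rw [← hC.2 s hs, Fintype.sum_prod_type]
  refine sum_congr rfl fun x _ => ?_
  rw [sum_eq_single x (fun y _ hyx => hoff x y hyx.symm) fun h => absurd (mem_univ x) h]

end JointMeasurement

section OffDiagonalTransfer

variable {X : Type*} [DecidableEq X] {x x' : X}

def dipole (x x' : X) : X → ℝ := Pi.single x 1 - Pi.single x' 1

theorem dipole_apply (x x' i : X) :
    dipole x x' i = (if i = x then 1 else 0) - (if i = x' then 1 else 0) := by
  simp [dipole, Pi.single_apply]

theorem sum_dipole [Fintype X] (x x' : X) : ∑ i, dipole x x' i = 0 := by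
  simp [dipole_apply, sum_sub_distrib]

theorem dipole_left (h : x ≠ x') : dipole x x' x = 1 := by simp [dipole_apply, h]

theorem dipole_right (h : x ≠ x') : dipole x x' x' = -1 := by simp [dipole_apply, h.symm]

theorem dipole_of_ne {i : X} (hx : i ≠ x) (hx' : i ≠ x') : dipole x x' i = 0 := by
  simp [dipole_apply, hx, hx']

theorem sum_dipole_sq [Fintype X] (h : x ≠ x') : ∑ i, dipole x x' i ^ 2 = 2 := by
  rw [← add_sum_erase _ _ (mem_univ x), ← add_sum_erase _ _ (mem_erase.2 ⟨h.symm, mem_univ x'⟩),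
    sum_eq_zero fun i hi => ?_]
  · norm_num [dipole_left h, dipole_right h]
  · obtain ⟨hx', hx⟩ := mem_erase.1 hi
    simp [dipole_of_ne (mem_erase.1 hx).1 hx']

theorem dipole_mul_dipole_nonpos {i j : X} (hij : i ≠ j) :
    dipole x x' i * dipole x x' j ≤ 0 := by
  simp only [dipole_apply]
  split_ifs <;> simp_all

variable {V : Type*} [AddCommGroup V] [Module ℝ V] {S : Set V}

/-- The diagonal joint measurement of `A` with itself, with `b` moved from the entries `(x, x)` and
`(x', x')` to `(x, x')` and `(x', x)`. -/
def offDiagonalTransfer (A : X → V →ᵃ[ℝ] ℝ) (x x' : X) (b : V →ᵃ[ℝ] ℝ) :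
    X × X → V →ᵃ[ℝ] ℝ :=
  fun p => (if p.1 = p.2 then A p.1 else 0) - (dipole x x' p.1 * dipole x x' p.2) • b

theorem offDiagonalTransfer_apply (A : X → V →ᵃ[ℝ] ℝ) (b : V →ᵃ[ℝ] ℝ) (i j : X) (s : V) :
    offDiagonalTransfer A x x' b (i, j) s =
      (if i = j then A i s else 0) - dipole x x' i * dipole x x' j * b s := by
  simp only [offDiagonalTransfer, AffineMap.coe_sub, AffineMap.coe_smul, Pi.sub_apply,
    Pi.smul_apply, smul_eq_mul, apply_ite (fun f : V →ᵃ[ℝ] ℝ => f s), AffineMap.coe_zero,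
    Pi.zero_apply]

variable [Fintype X] {A : X → V →ᵃ[ℝ] ℝ} {b : V →ᵃ[ℝ] ℝ}

theorem sum_offDiagonalTransfer_diag (h : x ≠ x') (s : V) :
    ∑ i, offDiagonalTransfer A x x' b (i, i) s = ∑ i, A i s - 2 * b s := by
  simp only [offDiagonalTransfer_apply, if_true, sum_sub_distrib, ← sum_mul, ← sq,
    sum_dipole_sq h]

theorem isJointMeasurement_offDiagonalTransfer (hA : IsMeasurement S A) (h : x ≠ x')
    (hb : ∀ s ∈ S, 0 ≤ b s) (hbx : ∀ s ∈ S, b s ≤ A x s) (hbx' : ∀ s ∈ S, b s ≤ A x' s) :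
    IsJointMeasurement S A A (offDiagonalTransfer A x x' b) := by
  refine isJointMeasurement_of_nonneg hA (fun ⟨i, j⟩ s hs => ?_) (fun i s _ => ?_)
    (fun j s _ => ?_)
  · rw [offDiagonalTransfer_apply]
    split_ifs with hij
    · subst hij
      by_cases hx : i = x
      · subst hx; simp [dipole_left h, hbx s hs]
      by_cases hx' : i = x'
      · subst hx'; simp [dipole_right h, hbx' s hs]
      simp [dipole_of_ne hx hx', (hA.1 i s hs).1]
    · rw [zero_sub, neg_nonneg]
      exact mul_nonpos_of_nonpos_of_nonneg (dipole_mul_dipole_nonpos hij) (hb s hs)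
  · simp only [offDiagonalTransfer_apply, sum_sub_distrib, sum_ite_eq, mem_univ, if_true,
      ← sum_mul, ← mul_sum, sum_dipole, mul_zero, zero_mul, sub_zero]
  · simp only [offDiagonalTransfer_apply, sum_sub_distrib, sum_ite_eq', mem_univ, if_true,
      ← sum_mul, sum_dipole, zero_mul, sub_zero]

end OffDiagonalTransfer

theorem intersubjective_iff_sharp_general {V : Type*} [NormedAddCommGroup V] [NormedSpace ℝ V]
    (S : Set V)
    {X : Type*} [Fintype X] (A : X → (V →ᵃ[ℝ] ℝ)) (hA : IsMeasurement S A) :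
    (∀ B : X × X → (V →ᵃ[ℝ] ℝ), IsJointMeasurement S A A B →
        ∀ s ∈ S, ∑ x, B (x, x) s = 1) ↔
      (∀ x x', x ≠ x' → ∀ b : V →ᵃ[ℝ] ℝ, IsEffect S b → (∀ s ∈ S, b s ≤ A x s) →
        (∀ s ∈ S, b s ≤ A x' s) → ∀ s ∈ S, b s = 0) := by
  classical
  constructor
  · intro hdiag x x' hxx' b hb hbx hbx' s hs
    have h := hdiag _
      (isJointMeasurement_offDiagonalTransfer hA hxx' (fun t ht => (hb t ht).1) hbx hbx') s hs
    rw [sum_offDiagonalTransfer_diag hxx', hA.2 s hs] at h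
    linarith
  · intro hsharp B hB s hs
    exact hB.1.sum_diag_eq_one hs fun x y hxy => hsharp x y hxy (B (x, y)) (hB.1.1 _)
      (fun t ht => hB.apply_le_left x y ht) (fun t ht => hB.apply_le_right x y ht) s hs

/-- a measurement is intersubjective (every joint measurement of it with itself
has diagonal summing to `1_S`) iff it is sharp (for distinct outcomes, the only common
lower-bound effect is zero). -/
theorem intersubjective_iff_sharp {V : Type*} [NormedAddCommGroup V] [NormedSpace ℝ V]
    (S : Set V) (hSconv : Convex ℝ S) (hScomp : IsCompact S)
    {X : Type*} [Fintype X] (A : X → (V →ᵃ[ℝ] ℝ)) (hA : IsMeasurement S A) :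
    (∀ B : X × X → (V →ᵃ[ℝ] ℝ), IsJointMeasurement S A A B →
        ∀ s ∈ S, ∑ x, B (x, x) s = 1) ↔
      (∀ x x', x ≠ x' → ∀ b : V →ᵃ[ℝ] ℝ, IsEffect S b → (∀ s ∈ S, b s ≤ A x s) →
        (∀ s ∈ S, b s ≤ A x' s) → ∀ s ∈ S, b s = 0) :=
  intersubjective_iff_sharp_general S A hA
end

section
/- Let A and B be finite-outcome measurements on a state space S that are α-intersubjective and β-intersubjective respectively. Then any joint measurement C of A and B is (α+β−1)-intersubjective. -/
open Finset

/-!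
Let `D` be a joint measurement of `C` with itself. Forgetting the `Y`-components of both outcomes
turns `D` into a joint measurement of `A` with itself, so `D` gives weight at least `α` to the
event `x = x'`; likewise it gives weight at least `β` to `y = y'`. As the weights of `D` are
nonnegative and sum to `1`, inclusion–exclusion leaves weight at least `α + β - 1` on the
intersection of the two events, which is the diagonal.
-/

theorem AffineMap.sum_apply {k V₁ P₁ V₂ ι : Type*} [Ring k] [AddCommGroup V₁] [Module k V₁]
    [AddTorsor V₁ P₁] [AddCommGroup V₂] [Module k V₂] (t : Finset ι) (f : ι → P₁ →ᵃ[k] V₂)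
    (p : P₁) : (∑ i ∈ t, f i) p = ∑ i ∈ t, f i p :=
  map_sum (AddMonoidHom.mk' (fun g : P₁ →ᵃ[k] V₂ => g p) fun _ _ => rfl) f t

theorem Finset.sum_filter_add_sum_filter_le {ι M : Type*} [Fintype ι] [AddCommMonoid M]
    [PartialOrder M] [IsOrderedAddMonoid M] (p q : ι → Prop) [DecidablePred p] [DecidablePred q]
    {u : ι → M} (hu : ∀ i, 0 ≤ u i) :
    ∑ i with p i, u i + ∑ i with q i, u i ≤ ∑ i, u i + ∑ i with p i ∧ q i, u i := by
  classical
  rw [filter_and, ← sum_union_inter]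
  exact add_le_add_left (sum_le_sum_of_subset_of_nonneg (subset_univ _) fun i _ _ => hu i) _

section CoarseGrain

variable {V : Type*} [AddCommGroup V] [Module ℝ V] {S : Set V} {Z W : Type*} [Fintype Z]

def coarseGrain [DecidableEq W] (f : Z → W) (C : Z → V →ᵃ[ℝ] ℝ) : W → V →ᵃ[ℝ] ℝ :=
  fun w => ∑ z with f z = w, C z

variable [DecidableEq W]

theorem coarseGrain_apply (f : Z → W) (C : Z → V →ᵃ[ℝ] ℝ) (w : W) (s : V) :
    coarseGrain f C w s = ∑ z with f z = w, C z s :=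
  AffineMap.sum_apply _ _ _

theorem coarseGrain_coarseGrain [Fintype W] {U : Type*} [DecidableEq U] (f : Z → W) (g : W → U)
    (C : Z → V →ᵃ[ℝ] ℝ) : coarseGrain g (coarseGrain f C) = coarseGrain (g ∘ f) C := by
  funext u
  simp only [coarseGrain, sum_fiberwise_eq_sum_filter, mem_filter, mem_univ, true_and,
    Function.comp_apply]

theorem eqOn_coarseGrain (f : Z → W) {C C' : Z → V →ᵃ[ℝ] ℝ} (h : ∀ z, Set.EqOn (C z) (C' z) S)
    (w : W) : Set.EqOn (coarseGrain f C w) (coarseGrain f C' w) S := fun s hs => by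
  simp only [coarseGrain_apply, h _ hs]

theorem sum_coarseGrain_apply [Fintype W] (f : Z → W) (C : Z → V →ᵃ[ℝ] ℝ) (s : V) :
    ∑ w, coarseGrain f C w s = ∑ z, C z s := by
  simp only [coarseGrain_apply, sum_fiberwise]

theorem isMeasurement_coarseGrain [Fintype W] {C : Z → V →ᵃ[ℝ] ℝ} (hC : IsMeasurement S C)
    (f : Z → W) : IsMeasurement S (coarseGrain f C) := by
  have hnonneg : ∀ w, ∀ s ∈ S, 0 ≤ coarseGrain f C w s := fun w s hs => by
    rw [coarseGrain_apply]
    exact sum_nonneg fun z _ => (hC.1 z s hs).1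
  have hsum : ∀ s ∈ S, ∑ w, coarseGrain f C w s = 1 := fun s hs => by
    rw [sum_coarseGrain_apply, hC.2 s hs]
  refine ⟨fun w s hs => ⟨hnonneg w s hs, ?_⟩, hsum⟩
  rw [← hsum s hs]
  exact single_le_sum (f := fun w => coarseGrain f C w s) (fun w _ => hnonneg w s hs) (mem_univ w)

theorem sum_coarseGrain_prodMap_diag_apply [Fintype W] (f : Z → W) (D : Z × Z → V →ᵃ[ℝ] ℝ)
    (s : V) : ∑ w, coarseGrain (Prod.map f f) D (w, w) s = ∑ z with f z.1 = f z.2, D z s := by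
  rw [← sum_diag univ (fun p => coarseGrain (Prod.map f f) D p s)]
  simp only [coarseGrain_apply, sum_fiberwise_eq_sum_filter, mem_diag, mem_univ, true_and,
    Prod.map_fst, Prod.map_snd]

theorem coarseGrain_fst_apply {X Y : Type*} [Fintype X] [Fintype Y] [DecidableEq X]
    (C : X × Y → V →ᵃ[ℝ] ℝ) (x : X) (s : V) :
    coarseGrain Prod.fst C x s = ∑ y, C (x, y) s := by
  rw [coarseGrain_apply, sum_filter, Fintype.sum_prod_type, sum_comm]
  simp only [sum_ite_eq', mem_univ, if_true]

theorem coarseGrain_snd_apply {X Y : Type*} [Fintype X] [Fintype Y] [DecidableEq Y]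
    (C : X × Y → V →ᵃ[ℝ] ℝ) (y : Y) (s : V) :
    coarseGrain Prod.snd C y s = ∑ x, C (x, y) s := by
  rw [coarseGrain_apply, sum_filter, Fintype.sum_prod_type]
  simp only [sum_ite_eq', mem_univ, if_true]

end CoarseGrain

section JointMeasurement

variable {V : Type*} [AddCommGroup V] [Module ℝ V] {S : Set V}
  {X Y : Type*} [Fintype X] [Fintype Y]
  {A : X → V →ᵃ[ℝ] ℝ} {B : Y → V →ᵃ[ℝ] ℝ}

theorem IsJointMeasurement.eqOn_coarseGrain_fst [DecidableEq X] {C : X × Y → V →ᵃ[ℝ] ℝ}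
    (hC : IsJointMeasurement S A B C) (x : X) : Set.EqOn (coarseGrain Prod.fst C x) (A x) S :=
  fun s hs => (coarseGrain_fst_apply C x s).trans (hC.2.1 x s hs)

theorem IsJointMeasurement.eqOn_coarseGrain_snd [DecidableEq Y] {C : X × Y → V →ᵃ[ℝ] ℝ}
    (hC : IsJointMeasurement S A B C) (y : Y) : Set.EqOn (coarseGrain Prod.snd C y) (B y) S :=
  fun s hs => (coarseGrain_snd_apply C y s).trans (hC.2.2 y s hs)

theorem isJointMeasurement_coarseGrain [DecidableEq X] [DecidableEq Y]
    {Z Z' : Type*} [Fintype Z] [Fintype Z']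
    {E : Z → V →ᵃ[ℝ] ℝ} {F : Z' → V →ᵃ[ℝ] ℝ} {D : Z × Z' → V →ᵃ[ℝ] ℝ}
    (hD : IsJointMeasurement S E F D) (f : Z → X) (g : Z' → Y)
    (hA : ∀ x, Set.EqOn (coarseGrain f E x) (A x) S)
    (hB : ∀ y, Set.EqOn (coarseGrain g F y) (B y) S) :
    IsJointMeasurement S A B (coarseGrain (Prod.map f g) D) := by
  classical
  refine ⟨isMeasurement_coarseGrain hD.1 _, fun x s hs => ?_, fun y s hs => ?_⟩
  · calc ∑ y, coarseGrain (Prod.map f g) D (x, y) s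
        = coarseGrain Prod.fst (coarseGrain (Prod.map f g) D) x s :=
          (coarseGrain_fst_apply _ x s).symm
      _ = coarseGrain f (coarseGrain Prod.fst D) x s := by
          rw [coarseGrain_coarseGrain, coarseGrain_coarseGrain]; rfl
      _ = coarseGrain f E x s := eqOn_coarseGrain f hD.eqOn_coarseGrain_fst x hs
      _ = A x s := hA x hs
  · calc ∑ x, coarseGrain (Prod.map f g) D (x, y) s
        = coarseGrain Prod.snd (coarseGrain (Prod.map f g) D) y s :=
          (coarseGrain_snd_apply _ y s).symm
      _ = coarseGrain g (coarseGrain Prod.snd D) y s := by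
          rw [coarseGrain_coarseGrain, coarseGrain_coarseGrain]; rfl
      _ = coarseGrain g F y s := eqOn_coarseGrain g hD.eqOn_coarseGrain_snd y hs
      _ = B y s := hB y hs

end JointMeasurement

theorem joint_intersubjective_general {V : Type*} [NormedAddCommGroup V] [NormedSpace ℝ V]
    (S : Set V)
    {X Y : Type*} [Fintype X] [Fintype Y]
    (A : X → (V →ᵃ[ℝ] ℝ)) (B : Y → (V →ᵃ[ℝ] ℝ))
    (α β : ℝ)
    (hAIS : Intersubjective S α A) (hBIS : Intersubjective S β B)
    (C : X × Y → (V →ᵃ[ℝ] ℝ)) (hC : IsJointMeasurement S A B C) :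
    Intersubjective S (α + β - 1) C := by
  classical
  intro D hD s hs
  have hα := hAIS _ (isJointMeasurement_coarseGrain hD Prod.fst Prod.fst
    hC.eqOn_coarseGrain_fst hC.eqOn_coarseGrain_fst) s hs
  have hβ := hBIS _ (isJointMeasurement_coarseGrain hD Prod.snd Prod.snd
    hC.eqOn_coarseGrain_snd hC.eqOn_coarseGrain_snd) s hs
  rw [sum_coarseGrain_prodMap_diag_apply] at hα hβ
  have hunion := sum_filter_add_sum_filter_le (fun w : (X × Y) × (X × Y) => w.1.1 = w.2.1)
    (fun w => w.1.2 = w.2.2) (fun w => (hD.1.1 w s hs).1)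
  have hdiag : ∑ w with w.1.1 = w.2.1 ∧ w.1.2 = w.2.2, D w s = ∑ z, D (z, z) s := by
    rw [← sum_diag univ (fun w => D w s)]
    exact sum_congr (by ext w; simp [Prod.ext_iff]) fun _ _ => rfl
  linarith [hD.1.2 s hs]

/-- a joint measurement of an `α`-intersubjective measurement and a
`β`-intersubjective measurement is `(α + β - 1)`-intersubjective. -/
theorem joint_intersubjective {V : Type*} [NormedAddCommGroup V] [NormedSpace ℝ V]
    (S : Set V) (hSconv : Convex ℝ S) (hScomp : IsCompact S)
    {X Y : Type*} [Fintype X] [Fintype Y]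
    (A : X → (V →ᵃ[ℝ] ℝ)) (B : Y → (V →ᵃ[ℝ] ℝ))
    (hA : IsMeasurement S A) (hB : IsMeasurement S B) (α β : ℝ)
    (hAIS : Intersubjective S α A) (hBIS : Intersubjective S β B)
    (C : X × Y → (V →ᵃ[ℝ] ℝ)) (hC : IsJointMeasurement S A B C) :
    Intersubjective S (α + β - 1) C :=
  joint_intersubjective_general S A B α β hAIS hBIS C hC
end
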